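/- arXiv:math/0512612 — 3 statements merged into one kernel-verified Lean document; each statement's English description precedes it below -/
import Mathlib

section
/- For any configuration of pegs on the one-dimensional board and any Berge k-move transforming it into a new configuration, the disorder of the new configuration differs from the disorder of the old configuration by at most 2. -/
/-- A board configuration has finite support: only finitely many positions hold pegs. -/
def FinSupp (c : ℤ → Option Bool) : Prop := {p : ℤ | (c p).isSome}.Finite

/-- The disorder: number of pegs `p` such that it is NOT the case that the next peg
to the right of `p` exists and has the same color. -/
noncomputable def disorder (c : ℤ → Option Bool) : ℕ :=
  Set.ncard {p : ℤ | (c p).isSome ∧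
    ¬ ∃ q : ℤ, p < q ∧ c q = c p ∧ ∀ r : ℤ, p < r → r < q → c r = none}

/-- A Berge `k`-move taking the `k` pegs at positions `i, i+1, ..., i+k-1` to the
`k` vacant positions `j, j+1, ..., j+k-1`, preserving order. -/
def MoveTo (k : ℕ) (i j : ℤ) (c c' : ℤ → Option Bool) : Prop :=
  (j + k ≤ i ∨ i + k ≤ j) ∧
  (∀ t : ℤ, 0 ≤ t → t < k → (c (i + t)).isSome ∧ c (j + t) = none) ∧
  c' = fun p => if j ≤ p ∧ p < j + k then c (i + (p - j))
    else if i ≤ p ∧ p < i + k then none else c p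

/-- A Berge `k`-move from some source to some destination. -/
def BergeMove (k : ℕ) (c c' : ℤ → Option Bool) : Prop :=
  ∃ i j : ℤ, MoveTo k i j c c'

/-- The alternating configuration of `n` pegs: pegs at positions `1,...,n`,
white (`true`) at odd positions and black (`false`) at even positions. -/
def altConfig (n : ℕ) : ℤ → Option Bool :=
  fun p => if 1 ≤ p ∧ p ≤ (n : ℤ) then some (decide (p % 2 = 1)) else none

/-- A sorted configuration of `n` pegs: a contiguous block of `n` pegs, the first
`⌈n/2⌉` of one color, followed by the remaining `⌊n/2⌋` of the other color. -/
def IsSorted (n : ℕ) (c : ℤ → Option Bool) : Prop :=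
  ∃ j : ℤ, ∃ w : Bool,
    (∀ p : ℤ, (c p).isSome ↔ (j ≤ p ∧ p < j + (n : ℤ))) ∧
    (∀ p : ℤ, j ≤ p → p < j + (((n + 1) / 2 : ℕ) : ℤ) → c p = some w) ∧
    (∀ p : ℤ, j + (((n + 1) / 2 : ℕ) : ℤ) ≤ p → p < j + (n : ℤ) → c p = some (!w))

/-- The alternating configuration of `n` pegs can be sorted in `m` Berge `k`-moves. -/
def SortsIn (k n m : ℕ) : Prop :=
  ∃ f : ℕ → (ℤ → Option Bool), f 0 = altConfig n ∧
    (∀ i < m, BergeMove k (f i) (f (i + 1))) ∧ IsSorted n (f m)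

namespace BergeAux

/-! ### Word-level combinatorics -/

/-- mismatch indicator -/
def d (a b : Bool) : ℕ := if a = b then 0 else 1

/-- mismatch count of `a :: l` -/
def M : Bool → List Bool → ℕ
  | _, [] => 0
  | a, b :: l => d a b + M b l

/-- last of `a :: l` -/
def G : Bool → List Bool → Bool
  | a, [] => a
  | _, b :: l => G b l

/-- disorder of a word -/
def F : List Bool → ℕ
  | [] => 0
  | a :: l => 1 + M a l

lemma M_append (a : Bool) (u v : List Bool) :
    M a (u ++ v) = M a u + M (G a u) v := by
  induction u generalizing a with
  | nil => simp [M, G]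
  | cons b u ih => simp [M, G, ih b]; ring

/-- boundary correction term -/
def E (a b : Bool) (x y : List Bool) : ℤ :=
  match x, y with
  | [], [] => 1
  | [], c :: _ => d b c
  | p :: x0, [] => d (G p x0) a
  | p :: x0, c :: _ => d (G p x0) a + d b c - d (G p x0) c

lemma F_decomp (a : Bool) (s x y : List Bool) :
    (F (x ++ (a :: s) ++ y) : ℤ) = F (x ++ y) + M a s + E a (G a s) x y := by
  match x, y with
  | [], [] => simp [F, E, M_append, M, G]; ring
  | [], c :: y0 => simp [F, E, M_append, M, G]; push_cast; ring
  | p :: x0, [] => simp [F, E, M_append, M, G]; push_cast; ring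
  | p :: x0, c :: y0 =>
    simp only [List.cons_append, List.nil_append, List.append_assoc, F]
    rw [M_append, M_append]
    simp only [E, M, G, M_append]
    push_cast; ring

lemma E_ge (a b : Bool) (x y : List Bool) : -1 ≤ E a b x y := by
  match x, y with
  | [], [] => simp [E]
  | [], c :: _ => simp [E, d]; split <;> simp
  | p :: x0, [] => simp [E, d]; split <;> simp
  | p :: x0, c :: _ =>
    simp only [E, d]
    split <;> split <;> split <;> simp_all <;> omega

lemma E_le (a b : Bool) (x y : List Bool) : E a b x y ≤ 2 := by
  match x, y with
  | [], [] => simp [E]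
  | [], c :: _ => simp [E, d]; split <;> simp
  | p :: x0, [] => simp [E, d]; split <;> simp
  | p :: x0, c :: _ =>
    simp only [E, d]
    split <;> split <;> split <;> simp_all <;> omega

lemma E_eq_neg_one (a b : Bool) (x y : List Bool) (h : E a b x y = -1) : a ≠ b := by
  match x, y with
  | [], [] => simp [E] at h
  | [], c :: _ => simp [E, d] at h; split at h <;> omega
  | p :: x0, [] => simp [E, d] at h; split at h <;> omega
  | p :: x0, c :: _ =>
    simp only [E, d] at h
    split at h <;> split at h <;> split at h <;> simp_all <;> omega

lemma E_eq_two (a b : Bool) (x y : List Bool) (h : E a b x y = 2) : a = b := by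
  match x, y with
  | [], [] => simp [E] at h
  | [], c :: _ => simp [E, d] at h; split at h <;> omega
  | p :: x0, [] => simp [E, d] at h; split at h <;> omega
  | p :: x0, c :: _ =>
    simp only [E, d] at h
    split at h <;> split at h <;> split at h <;>
      first
      | omega
      | (rename_i h1 h2 h3; revert h1 h2 h3; cases a <;> cases b <;> cases c <;>
          cases (G p x0) <;> simp_all <;> omega)

/-- Key list lemma: moving a nonempty block changes `F` by at most 2 (one side). -/
lemma F_move_le (a : Bool) (s x y x' y' : List Bool) (hxy : x ++ y = x' ++ y') :
    (F (x' ++ (a :: s) ++ y') : ℤ) ≤ F (x ++ (a :: s) ++ y) + 2 := by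
  rw [F_decomp, F_decomp, hxy]
  have h1 := E_ge a (G a s) x y
  have h2 := E_le a (G a s) x' y'
  by_cases h3 : E a (G a s) x y = -1
  · by_cases h4 : E a (G a s) x' y' = 2
    · exact absurd (E_eq_two _ _ _ _ h4) (fun hh => E_eq_neg_one _ _ _ _ h3 hh)
    · omega
  · omega

lemma F_move_le' (B x y x' y' : List Bool) (hB : B ≠ []) (hxy : x ++ y = x' ++ y') :
    (F (x' ++ B ++ y') : ℤ) ≤ F (x ++ B ++ y) + 2 := by
  cases B with
  | nil => exact absurd rfl hB
  | cons a s => exact F_move_le a s x y x' y' hxy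

/-! ### From configurations to words -/

def Dset (c : ℤ → Option Bool) : Set ℤ :=
  {p : ℤ | (c p).isSome ∧
    ¬ ∃ q : ℤ, p < q ∧ c q = c p ∧ ∀ r : ℤ, p < r → r < q → c r = none}

noncomputable def disorder' (c : ℤ → Option Bool) : ℕ := Set.ncard (Dset c)

def Enum (c : ℤ → Option Bool) (l : List ℤ) : Prop :=
  l.Pairwise (· < ·) ∧ ∀ p, p ∈ l ↔ (c p).isSome

def color (c : ℤ → Option Bool) (p : ℤ) : Bool := (c p).getD false

lemma color_eq (c : ℤ → Option Bool) {p : ℤ} (h : (c p).isSome) :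
    c p = some (color c p) := by
  cases hc : c p with
  | none => rw [hc] at h; simp at h
  | some w => simp [color, hc]

lemma disorder_eq (l : List ℤ) (c : ℤ → Option Bool) (h : Enum c l) :
    disorder' c = F (l.map (color c)) := by
  induction l generalizing c with
  | nil =>
    have hD : Dset c = ∅ := by
      ext p
      simp only [Dset, Set.mem_setOf_eq, Set.mem_empty_iff_false, iff_false, not_and]
      intro hp
      exact absurd ((h.2 p).mpr hp) List.not_mem_nil
    simp [disorder', hD, F]
  | cons m rest ih =>
    obtain ⟨hsort, hmem⟩ := h
    rw [List.pairwise_cons] at hsort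
    obtain ⟨hlt, hrsort⟩ := hsort
    have hcm : (c m).isSome := (hmem m).mp List.mem_cons_self
    have hmemc : ∀ p : ℤ, (c p).isSome → p = m ∨ p ∈ rest :=
      fun p hp => List.mem_cons.mp ((hmem p).mpr hp)
    set c₂ : ℤ → Option Bool := fun p => if p = m then none else c p with hc₂
    have hagree : ∀ r : ℤ, m < r → c₂ r = c r := by
      intro r hr
      simp [hc₂, ne_of_gt hr, (ne_of_gt hr).symm]
    have henum₂ : Enum c₂ rest := by
      refine ⟨hrsort, fun p => ⟨fun hp => ?_, fun hp => ?_⟩⟩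
      · rw [hagree p (hlt p hp)]
        exact (hmem p).mp (List.mem_cons_of_mem m hp)
      · have hpm : p ≠ m := by
          intro he; rw [he] at hp; simp [hc₂] at hp
        have hcc : c₂ p = c p := by simp [hc₂, hpm]
        rw [hcc] at hp
        rcases hmemc p hp with h1 | h1
        · exact absurd h1 hpm
        · exact h1
    have hbad : ∀ p : ℤ, m < p → (p ∈ Dset c₂ ↔ p ∈ Dset c) := by
      intro p hp
      have hcp : c₂ p = c p := hagree p hp
      simp only [Dset, Set.mem_setOf_eq, hcp]
      constructor
      · rintro ⟨h1, h2⟩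
        refine ⟨h1, fun ⟨q, hq1, hq2, hq3⟩ => h2 ⟨q, hq1, ?_, fun r hr1 hr2 => ?_⟩⟩
        · rw [hagree q (hp.trans hq1)]; exact hq2
        · rw [hagree r (hp.trans hr1)]; exact hq3 r hr1 hr2
      · rintro ⟨h1, h2⟩
        refine ⟨h1, fun ⟨q, hq1, hq2, hq3⟩ => h2 ⟨q, hq1, ?_, fun r hr1 hr2 => ?_⟩⟩
        · rw [← hagree q (hp.trans hq1)]; exact hq2
        · rw [← hagree r (hp.trans hr1)]; exact hq3 r hr1 hr2
    have hD2 : Dset c₂ = Dset c \ {m} := by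
      ext p
      constructor
      · intro hp
        have hps : (c₂ p).isSome := hp.1
        have hpr : p ∈ rest := (henum₂.2 p).mpr hps
        have hmp : m < p := hlt p hpr
        exact ⟨(hbad p hmp).mp hp, by simp [ne_of_gt hmp]⟩
      · rintro ⟨hp, hpm⟩
        simp only [Set.mem_singleton_iff] at hpm
        have hps : (c p).isSome := hp.1
        have hpr : p ∈ rest := by
          rcases hmemc p hps with h1 | h1
          · exact absurd h1 hpm
          · exact h1
        exact (hbad p (hlt p hpr)).mpr hp
    have hfin₂ : (Dset c₂).Finite := by
      apply Set.Finite.subset (rest.finite_toSet)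
      intro p hp
      exact (henum₂.2 p).mpr hp.1
    have hmnot : m ∉ Dset c₂ := by
      intro hm
      have hs : (c₂ m).isSome := hm.1
      simp [hc₂] at hs
    have hmchar : (m ∈ Dset c) ↔ (∀ m' t, rest = m' :: t → color c m ≠ color c m') := by
      cases hr : rest with
      | nil =>
        subst hr
        constructor
        · intro _ m' t he; exact absurd he (by simp)
        · intro _
          refine ⟨hcm, ?_⟩
          rintro ⟨q, hq1, hq2, _⟩
          have hqs : (c q).isSome := by rw [hq2]; exact hcm
          rcases hmemc q hqs with h1 | h1
          · omega
          · simp at h1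
      | cons m' t =>
        subst hr
        have hmm' : m < m' := hlt m' List.mem_cons_self
        have hcm' : (c m').isSome := (hmem m').mp (by simp)
        constructor
        · intro hm m'' t' he
          injection he with he1 he2
          subst he1; subst he2
          intro hco
          apply hm.2
          refine ⟨m', hmm', ?_, ?_⟩
          · rw [color_eq c hcm, color_eq c hcm', hco]
          · intro r hr1 hr2
            by_contra hrc
            have hrs : (c r).isSome := by
              cases hcr : c r with
              | none => exact absurd hcr hrc
              | some w => simp
            rcases hmemc r hrs with h1 | h1
            · omega
            · rcases List.mem_cons.mp h1 with h2 | h2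
              · omega
              · have := List.rel_of_pairwise_cons hrsort h2
                omega
        · intro hco
          have hne : color c m ≠ color c m' := hco m' t rfl
          refine ⟨hcm, ?_⟩
          rintro ⟨q, hq1, hq2, hq3⟩
          have hqs : (c q).isSome := by rw [hq2]; exact hcm
          have hq' : q ∈ m' :: t := by
            rcases hmemc q hqs with h1 | h1
            · omega
            · exact h1
          have hqge : m' ≤ q := by
            rcases List.mem_cons.mp hq' with h1 | h1
            · omega
            · exact le_of_lt (List.rel_of_pairwise_cons hrsort h1)
          rcases eq_or_lt_of_le hqge with h1 | h1
          · apply hne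
            have hh : some (color c m) = some (color c m') := by
              rw [← color_eq c hcm, ← color_eq c hcm']
              rw [h1]
              exact hq2.symm
            exact Option.some.inj hh
          · have hnone := hq3 m' hmm' h1
            rw [hnone] at hcm'
            simp at hcm'
    -- color agreement on rest
    have hcolagree : rest.map (color c₂) = rest.map (color c) := by
      apply List.map_congr_left
      intro p hp
      simp [color, hagree p (hlt p hp)]
    have hih := ih c₂ henum₂
    rw [hcolagree] at hih
    -- now split on badness of m and on rest to compute F
    by_cases hmb : m ∈ Dset c
    · have hDc : Dset c = insert m (Dset c₂) := by
        rw [hD2]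
        rw [Set.insert_diff_singleton]
        rw [Set.insert_eq_of_mem hmb]
      have : disorder' c = disorder' c₂ + 1 := by
        rw [disorder', disorder', hDc, Set.ncard_insert_of_notMem hmnot hfin₂]
      rw [this, hih]
      cases rest with
      | nil => simp [F, M]
      | cons m' t =>
        have hne : color c m ≠ color c m' := (hmchar.mp hmb) m' t rfl
        simp only [List.map_cons, F, M, d, if_neg hne]
        omega
    · have hDc : Dset c = Dset c₂ := by
        rw [hD2]
        ext p
        simp only [Set.mem_diff, Set.mem_singleton_iff]
        constructor
        · intro hp
          exact ⟨hp, fun he => hmb (he ▸ hp)⟩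
        · exact fun hp => hp.1
      have : disorder' c = disorder' c₂ := by rw [disorder', disorder', hDc]
      rw [this, hih]
      cases rest with
      | nil =>
        exfalso
        apply hmb
        refine ⟨hcm, ?_⟩
        rintro ⟨q, hq1, hq2, _⟩
        have hqs : (c q).isSome := by rw [hq2]; exact hcm
        rcases hmemc q hqs with h1 | h1
        · omega
        · simp at h1
      | cons m' t =>
        have heq : color c m = color c m' := by
          by_contra hne
          exact hmb (hmchar.mpr (fun m'' t' he => by
            injection he with he1 he2
            subst he1
            exact hne))
        simp only [List.map_cons, F, M, d, if_pos heq]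
        omega

lemma sorted_eq_of_mem_iff {l₁ l₂ : List ℤ} (h₁ : l₁.Pairwise (· < ·))
    (h₂ : l₂.Pairwise (· < ·)) (h : ∀ p, p ∈ l₁ ↔ p ∈ l₂) : l₁ = l₂ := by
  haveI : IsAntisymm ℤ (· < ·) := ⟨fun a b hab hba => absurd hba (not_lt.mpr hab.le)⟩
  exact List.Perm.eq_of_pairwise (fun a b _ _ hab hba => absurd hba (not_lt.mpr hab.le)) h₁ h₂ ((List.perm_ext_iff_of_nodup h₁.nodup h₂.nodup).mpr h)

noncomputable def slist (S : Set ℤ) (h : S.Finite) : List ℤ := h.toFinset.sort (· ≤ ·)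

lemma slist_sorted (S : Set ℤ) (h : S.Finite) : (slist S h).Pairwise (· < ·) :=
  (Finset.sortedLT_sort _).pairwise

lemma slist_mem (S : Set ℤ) (h : S.Finite) (p : ℤ) : p ∈ slist S h ↔ p ∈ S := by
  rw [slist, Finset.mem_sort, Set.Finite.mem_toFinset]

lemma move_symm {k : ℕ} {i j : ℤ} {c c' : ℤ → Option Bool}
    (h : MoveTo k i j c c') : MoveTo k j i c' c := by
  obtain ⟨hdisj, hocc, hc'⟩ := h
  have hblocks : ∀ t : ℤ, 0 ≤ t → t < k → ¬ (j ≤ i + t ∧ i + t < j + k) := by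
    intro t ht1 ht2 ⟨h1, h2⟩
    rcases hdisj with h3 | h3 <;> omega
  refine ⟨hdisj.symm, ?_, ?_⟩
  · intro t ht1 ht2
    constructor
    · rw [hc']
      simp only
      rw [if_pos ⟨by omega, by omega⟩]
      have he : i + (j + t - j) = i + t := by ring
      rw [he]
      exact (hocc t ht1 ht2).1
    · rw [hc']
      simp only
      rw [if_neg (hblocks t ht1 ht2), if_pos ⟨by omega, by omega⟩]
  · funext p
    by_cases h1 : i ≤ p ∧ p < i + k
    · rw [if_pos h1, hc']
      simp only
      rw [if_pos ⟨by omega, by omega⟩]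
      have he : i + (j + (p - i) - j) = p := by ring
      rw [he]
    · rw [if_neg h1]
      by_cases h2 : j ≤ p ∧ p < j + k
      · rw [if_pos h2]
        have hn := (hocc (p - j) (by omega) (by omega)).2
        have hpj : j + (p - j) = p := by ring
        rw [hpj] at hn
        exact hn
      · rw [if_neg h2, hc']
        simp only
        rw [if_neg h2, if_neg h1]

lemma finsupp_of_move {k : ℕ} {i j : ℤ} {c c' : ℤ → Option Bool}
    (h : MoveTo k i j c c') (hfin : FinSupp c) : FinSupp c' := by
  obtain ⟨hdisj, hocc, hc'⟩ := h
  apply (hfin.union (Set.finite_Ico j (j + k))).subset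
  intro p hp
  rw [Set.mem_setOf_eq, hc'] at hp
  simp only at hp
  by_cases h1 : j ≤ p ∧ p < j + k
  · exact Or.inr (Set.mem_Ico.mpr h1)
  · rw [if_neg h1] at hp
    by_cases h2 : i ≤ p ∧ p < i + k
    · rw [if_pos h2] at hp; simp at hp
    · rw [if_neg h2] at hp; exact Or.inl hp

lemma move_le {k : ℕ} {i j : ℤ} {c c' : ℤ → Option Bool} (hk : 0 < k)
    (hfin : FinSupp c) (hm : MoveTo k i j c c') :
    (disorder' c' : ℤ) ≤ (disorder' c : ℤ) + 2 := by
  have hfin' : FinSupp c' := finsupp_of_move hm hfin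
  obtain ⟨hdisj, hocc, hc'⟩ := hm
  have hsrc : ∀ t : ℤ, 0 ≤ t → t < k → (c (i + t)).isSome := fun t a b => (hocc t a b).1
  have hdest : ∀ p : ℤ, j ≤ p → p < j + k → c p = none := by
    intro p h1 h2
    have hn := (hocc (p - j) (by omega) (by omega)).2
    rw [show j + (p - j) = p by ring] at hn
    exact hn
  have hsrcO : ∀ p : ℤ, i ≤ p → p < i + k → (c p).isSome := by
    intro p h1 h2
    have hn := hsrc (p - i) (by omega) (by omega)
    rw [show i + (p - i) = p by ring] at hn
    exact hn
  have hc'B : ∀ t : ℤ, 0 ≤ t → t < k → c' (j + t) = c (i + t) := by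
    intro t h1 h2
    rw [hc']
    simp only
    rw [if_pos ⟨by omega, by omega⟩, show i + (j + t - j) = i + t by ring]
  have hc'out : ∀ p : ℤ, ¬(j ≤ p ∧ p < j + k) → ¬(i ≤ p ∧ p < i + k) → c' p = c p := by
    intro p h1 h2
    rw [hc']
    simp only
    rw [if_neg h1, if_neg h2]
  have hc'src : ∀ p : ℤ, (i ≤ p ∧ p < i + k) → c' p = none := by
    intro p h2
    have h1 : ¬(j ≤ p ∧ p < j + k) := by rcases hdisj with h | h <;> omega
    rw [hc']
    simp only
    rw [if_neg h1, if_pos h2]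
  -- the finite side sets
  have hSx : {p : ℤ | (c p).isSome ∧ p < i}.Finite := hfin.subset (fun p hp => hp.1)
  have hSy : {p : ℤ | (c p).isSome ∧ i + k ≤ p}.Finite := hfin.subset (fun p hp => hp.1)
  have hSx' : {p : ℤ | (c' p).isSome ∧ p < j}.Finite := hfin'.subset (fun p hp => hp.1)
  have hSy' : {p : ℤ | (c' p).isSome ∧ j + k ≤ p}.Finite := hfin'.subset (fun p hp => hp.1)
  set lx := slist _ hSx with hlx
  set ly := slist _ hSy with hly
  set lx' := slist _ hSx' with hlx'
  set ly' := slist _ hSy' with hly'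
  set lB : List ℤ := (List.range k).map (fun t : ℕ => i + (t : ℤ)) with hlB
  set lB' : List ℤ := (List.range k).map (fun t : ℕ => j + (t : ℤ)) with hlB'
  have hlBmem : ∀ z p : ℤ, p ∈ (List.range k).map (fun t : ℕ => z + (t : ℤ)) ↔
      (z ≤ p ∧ p < z + k) := by
    intro z p
    simp only [List.mem_map, List.mem_range]
    constructor
    · rintro ⟨t, ht, rfl⟩
      omega
    · intro ⟨h1, h2⟩
      exact ⟨(p - z).toNat, by omega, by omega⟩
  have hlBsort : ∀ z : ℤ, ((List.range k).map (fun t : ℕ => z + (t : ℤ))).Pairwise (· < ·) := by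
    intro z
    apply List.Pairwise.map
    · intro a b (hab : a < b)
      show z + (a : ℤ) < z + b
      omega
    · exact List.pairwise_lt_range
  -- enumeration of c
  have henum : Enum c ((lx ++ lB) ++ ly) := by
    constructor
    · rw [List.pairwise_append, List.pairwise_append]
      refine ⟨⟨slist_sorted _ _, hlBsort i, ?_⟩, slist_sorted _ _, ?_⟩
      · intro a ha b hb
        have ha' := (slist_mem _ hSx a).mp ha
        have hb' := (hlBmem i b).mp hb
        exact lt_of_lt_of_le ha'.2 hb'.1
      · intro a ha b hb
        obtain ⟨-, hb'⟩ := (slist_mem _ hSy b).mp hb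
        rcases List.mem_append.mp ha with h1 | h1
        · obtain ⟨-, h2⟩ := (slist_mem _ hSx a).mp h1
          omega
        · obtain ⟨h2, h3⟩ := (hlBmem i a).mp h1
          omega
    · intro p
      simp only [hlx, hly, hlB, List.mem_append, slist_mem, Set.mem_setOf_eq, hlBmem i p]
      constructor
      · rintro ((h1 | h1) | h1)
        · exact h1.1
        · exact hsrcO p h1.1 h1.2
        · exact h1.1
      · intro hp
        by_cases h1 : p < i
        · exact Or.inl (Or.inl ⟨hp, h1⟩)
        · by_cases h2 : p < i + k
          · exact Or.inl (Or.inr ⟨by omega, h2⟩)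
          · exact Or.inr ⟨hp, by omega⟩
  -- enumeration of c'
  have hoccB' : ∀ p : ℤ, j ≤ p → p < j + k → (c' p).isSome := by
    intro p h1 h2
    have he := hc'B (p - j) (by omega) (by omega)
    rw [show j + (p - j) = p by ring] at he
    rw [he]
    exact hsrc (p - j) (by omega) (by omega)
  have henum' : Enum c' ((lx' ++ lB') ++ ly') := by
    constructor
    · rw [List.pairwise_append, List.pairwise_append]
      refine ⟨⟨slist_sorted _ _, hlBsort j, ?_⟩, slist_sorted _ _, ?_⟩
      · intro a ha b hb
        have ha' := (slist_mem _ hSx' a).mp ha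
        have hb' := (hlBmem j b).mp hb
        exact lt_of_lt_of_le ha'.2 hb'.1
      · intro a ha b hb
        obtain ⟨-, hb'⟩ := (slist_mem _ hSy' b).mp hb
        rcases List.mem_append.mp ha with h1 | h1
        · obtain ⟨-, h2⟩ := (slist_mem _ hSx' a).mp h1
          omega
        · obtain ⟨h2, h3⟩ := (hlBmem j a).mp h1
          omega
    · intro p
      simp only [hlx', hly', hlB', List.mem_append, slist_mem, Set.mem_setOf_eq, hlBmem j p]
      constructor
      · rintro ((h1 | h1) | h1)
        · exact h1.1
        · exact hoccB' p h1.1 h1.2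
        · exact h1.1
      · intro hp
        by_cases h1 : p < j
        · exact Or.inl (Or.inl ⟨hp, h1⟩)
        · by_cases h2 : p < j + k
          · exact Or.inl (Or.inr ⟨by omega, h2⟩)
          · exact Or.inr ⟨hp, by omega⟩
  -- the two "outside" lists coincide
  have houtmem : ∀ p : ℤ, p ∈ lx ++ ly ↔ ((c p).isSome ∧ ¬(i ≤ p ∧ p < i + k)) := by
    intro p
    simp only [hlx, hly, List.mem_append, slist_mem, Set.mem_setOf_eq]
    constructor
    · rintro (h1 | h1)
      · exact ⟨h1.1, by omega⟩
      · exact ⟨h1.1, by omega⟩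
    · rintro ⟨h1, h2⟩
      by_cases h3 : p < i
      · exact Or.inl ⟨h1, h3⟩
      · exact Or.inr ⟨h1, by omega⟩
  have houtmem' : ∀ p : ℤ, p ∈ lx' ++ ly' ↔ ((c p).isSome ∧ ¬(i ≤ p ∧ p < i + k)) := by
    intro p
    simp only [hlx', hly', List.mem_append, slist_mem, Set.mem_setOf_eq]
    constructor
    · rintro (h1 | h1)
      · -- p < j : p not in dest block
        have hnd : ¬(j ≤ p ∧ p < j + k) := by omega
        by_cases h2 : i ≤ p ∧ p < i + k
        · rw [hc'src p h2] at h1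
          simp at h1
        · rw [hc'out p hnd h2] at h1
          exact ⟨h1.1, h2⟩
      · have hnd : ¬(j ≤ p ∧ p < j + k) := by omega
        by_cases h2 : i ≤ p ∧ p < i + k
        · rw [hc'src p h2] at h1
          simp at h1
        · rw [hc'out p hnd h2] at h1
          exact ⟨h1.1, h2⟩
    · rintro ⟨h1, h2⟩
      have hnd : ¬(j ≤ p ∧ p < j + k) := by
        rintro ⟨h3, h4⟩
        rw [hdest p h3 h4] at h1
        simp at h1
      have hcc : c' p = c p := hc'out p hnd h2
      by_cases h3 : p < j
      · exact Or.inl ⟨by rw [hcc]; exact h1, h3⟩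
      · exact Or.inr ⟨by rw [hcc]; exact h1, by omega⟩
  have hsortout : (lx ++ ly).Pairwise (· < ·) := by
    rw [List.pairwise_append]
    refine ⟨slist_sorted _ _, slist_sorted _ _, ?_⟩
    intro a ha b hb
    obtain ⟨-, ha'⟩ := (slist_mem _ hSx a).mp ha
    obtain ⟨-, hb'⟩ := (slist_mem _ hSy b).mp hb
    omega
  have hsortout' : (lx' ++ ly').Pairwise (· < ·) := by
    rw [List.pairwise_append]
    refine ⟨slist_sorted _ _, slist_sorted _ _, ?_⟩
    intro a ha b hb
    obtain ⟨-, ha'⟩ := (slist_mem _ hSx' a).mp ha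
    obtain ⟨-, hb'⟩ := (slist_mem _ hSy' b).mp hb
    omega
  have hlisteq : lx' ++ ly' = lx ++ ly :=
    sorted_eq_of_mem_iff hsortout' hsortout (fun p => by rw [houtmem, houtmem'])
  -- color words
  have hWB : lB'.map (color c') = lB.map (color c) := by
    rw [hlB, hlB', List.map_map, List.map_map]
    apply List.map_congr_left
    intro t ht
    rw [List.mem_range] at ht
    show color c' (j + (t : ℤ)) = color c (i + (t : ℤ))
    unfold color
    rw [hc'B (t : ℤ) (by omega) (by omega)]
  have hWxy : (lx' ++ ly').map (color c') = (lx ++ ly).map (color c) := by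
    rw [hlisteq]
    apply List.map_congr_left
    intro p hp
    have hp' := (houtmem p).mp hp
    have hnd : ¬(j ≤ p ∧ p < j + k) := by
      rintro ⟨h3, h4⟩
      rw [hdest p h3 h4] at hp'
      simp at hp'
    unfold color
    rw [hc'out p hnd hp'.2]
  have hBne : lB.map (color c) ≠ [] := by
    rw [hlB]
    simp only [ne_eq, List.map_eq_nil_iff, List.range_eq_nil]
    omega
  rw [disorder_eq _ _ henum, disorder_eq _ _ henum']
  rw [List.map_append, List.map_append, List.map_append, List.map_append]
  rw [hWB]
  apply F_move_le' _ _ _ _ _ hBne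
  have := hWxy
  rw [List.map_append, List.map_append] at this
  exact this.symm

end BergeAux

theorem berge_move_disorder_change_le_two (k : ℕ) (c c' : ℤ → Option Bool)
    (hfin : FinSupp c) (h : BergeMove k c c') :
    |(disorder c' : ℤ) - (disorder c : ℤ)| ≤ 2 := by
  obtain ⟨i, j, hm⟩ := h
  rcases Nat.eq_zero_or_pos k with hk | hk
  · subst hk
    have hcc : c' = c := by
      rw [hm.2.2]
      funext p
      have h1 : ¬(j ≤ p ∧ p < j + ((0 : ℕ) : ℤ)) := by push_cast; omega
      have h2 : ¬(i ≤ p ∧ p < i + ((0 : ℕ) : ℤ)) := by push_cast; omega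
      simp only [if_neg h1, if_neg h2]
    rw [hcc]
    simp
  · have hd1 : disorder c = BergeAux.disorder' c := rfl
    have hd2 : disorder c' = BergeAux.disorder' c' := rfl
    have h1 := BergeAux.move_le hk hfin hm
    have h2 := BergeAux.move_le hk (BergeAux.finsupp_of_move hm hfin) (BergeAux.move_symm hm)
    rw [hd1, hd2, abs_le]
    constructor <;> linarith
end

section
/- For every k ≥ 1 and n ≥ 3, any sequence of Berge k-moves that transforms the alternating configuration of n pegs into a sorted configuration (⌈n/2⌉ pegs of one color followed immediately by ⌊n/2⌋ pegs of the other color) has length at least ⌊n/2⌋. -/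
/-! ### Auxiliary invariant: number of positionally adjacent same-color pairs -/

/-- The set of positions `p` such that `p` and `p+1` both hold pegs of the same color. -/
def goodSet (c : ℤ → Option Bool) : Set ℤ := {p : ℤ | (c p).isSome ∧ c (p + 1) = c p}

lemma goodSet_finite {c : ℤ → Option Bool} (hc : FinSupp c) : (goodSet c).Finite :=
  hc.subset (fun _ hp => hp.1)

/-- The number of positionally adjacent same-color pairs. -/
noncomputable def pairCount (c : ℤ → Option Bool) : ℕ := (goodSet c).ncard

lemma finSupp_move {k : ℕ} {i j : ℤ} {c c' : ℤ → Option Bool}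
    (hc : FinSupp c) (h : MoveTo k i j c c') : FinSupp c' := by
  obtain ⟨_, _, hc'⟩ := h
  apply (hc.union (Set.finite_Ico j (j + k))).subset
  intro p hp
  simp only [Set.mem_setOf_eq, hc'] at hp
  by_cases h1 : j ≤ p ∧ p < j + k
  · right; exact Set.mem_Ico.mpr h1
  · left
    simp only [h1, if_false] at hp
    by_cases h2 : i ≤ p ∧ p < i + k
    · simp [h2] at hp
    · simpa [h2] using hp

lemma finSupp_alt (n : ℕ) : FinSupp (altConfig n) := by
  apply (Set.finite_Icc (1 : ℤ) n).subset
  intro p hp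
  simp only [Set.mem_setOf_eq, altConfig] at hp
  by_cases ha : 1 ≤ p ∧ p ≤ (n : ℤ)
  · exact Set.mem_Icc.mpr ha
  · rw [if_neg ha] at hp; simp at hp

lemma goodSet_alt (n : ℕ) : goodSet (altConfig n) = ∅ := by
  ext p
  simp only [Set.mem_empty_iff_false, iff_false, goodSet, Set.mem_setOf_eq, not_and]
  intro h1 h2
  unfold altConfig at h1 h2
  by_cases ha : 1 ≤ p ∧ p ≤ (n : ℤ)
  · rw [if_pos ha] at h1 h2
    by_cases hb : 1 ≤ p + 1 ∧ p + 1 ≤ (n : ℤ)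
    · rw [if_pos hb] at h2
      simp only [Option.some.injEq, decide_eq_decide] at h2
      omega
    · rw [if_neg hb] at h2; exact absurd h2 (by simp)
  · rw [if_neg ha] at h1; simp at h1

/-- After a move, a good pair away from the two destination boundaries comes either
from inside the moved block or from an untouched good pair. -/
lemma move_classify {k : ℕ} {i j : ℤ} {c c' : ℤ → Option Bool}
    (h : MoveTo k i j c c') {p : ℤ} (hp : p ∈ goodSet c')
    (h1 : p ≠ j - 1) (h2 : p ≠ j + (k : ℤ) - 1) :
    (j ≤ p ∧ p < j + (k : ℤ) - 1 ∧ (i + (p - j)) ∈ goodSet c) ∨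
    (¬(j ≤ p ∧ p < j + (k : ℤ) - 1) ∧ ¬(i ≤ p ∧ p < i + (k : ℤ)) ∧ p ∈ goodSet c) := by
  obtain ⟨hdisj, hsrc, hc'⟩ := h
  obtain ⟨hps, hpe⟩ := hp
  rw [hc'] at hps hpe
  simp only at hps hpe
  by_cases hd : j ≤ p ∧ p < j + (k : ℤ)
  · have hlt : p < j + (k : ℤ) - 1 := by omega
    left
    refine ⟨hd.1, hlt, ?_, ?_⟩
    · rw [if_pos hd] at hps; exact hps
    · have hd1 : j ≤ p + 1 ∧ p + 1 < j + (k : ℤ) := by omega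
      rw [if_pos hd, if_pos hd1] at hpe
      have : i + (p + 1 - j) = i + (p - j) + 1 := by ring
      rw [this] at hpe
      exact hpe
  · right
    rw [if_neg hd] at hps hpe
    by_cases hs : i ≤ p ∧ p < i + (k : ℤ)
    · simp [hs] at hps
    · rw [if_neg hs] at hps hpe
      have hd1 : ¬(j ≤ p + 1 ∧ p + 1 < j + (k : ℤ)) := by omega
      rw [if_neg hd1] at hpe
      by_cases hs1 : i ≤ p + 1 ∧ p + 1 < i + (k : ℤ)
      · rw [if_pos hs1] at hpe
        rw [← hpe] at hps; simp at hps
      · rw [if_neg hs1] at hpe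
        exact ⟨by omega, hs, hps, hpe⟩

/-- A Berge move adds at most two good pairs. -/
lemma pairCount_move {k : ℕ} {i j : ℤ} {c c' : ℤ → Option Bool}
    (hc : FinSupp c) (h : MoveTo k i j c c') :
    pairCount c' ≤ pairCount c + 2 := by
  have hfin' : (goodSet c').Finite := goodSet_finite (finSupp_move hc h)
  have hfin : (goodSet c).Finite := goodSet_finite hc
  set s : Set ℤ := {j - 1, j + (k : ℤ) - 1} with hs
  set φ : ℤ → ℤ := fun p => if j ≤ p ∧ p < j + (k : ℤ) - 1 then p + (i - j) else p with hφ
  have hcls : ∀ p ∈ goodSet c' \ s,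
      (j ≤ p ∧ p < j + (k : ℤ) - 1 ∧ φ p = i + (p - j) ∧ φ p ∈ goodSet c
        ∧ i ≤ φ p ∧ φ p < i + (k : ℤ) - 1) ∨
      (φ p = p ∧ ¬(i ≤ p ∧ p < i + (k : ℤ)) ∧ p ∈ goodSet c) := by
    intro p hp
    obtain ⟨hpT, hps⟩ := hp
    have h1 : p ≠ j - 1 := fun hh => hps (by simp [hs, hh])
    have h2 : p ≠ j + (k : ℤ) - 1 := fun hh => hps (by simp [hs, hh])
    rcases move_classify h hpT h1 h2 with ⟨ha, hb, hg⟩ | ⟨ha, hb, hg⟩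
    · left
      have hφp : φ p = p + (i - j) := by
        simp only [hφ]; rw [if_pos (And.intro ha hb)]
      refine ⟨ha, hb, by rw [hφp]; ring, ?_, by omega, by omega⟩
      rw [hφp]; have : p + (i - j) = i + (p - j) := by ring
      rw [this]; exact hg
    · right
      have hφp : φ p = p := by
        simp only [hφ]; rw [if_neg ha]
      exact ⟨hφp, hb, hg⟩
  have hinj : Set.InjOn φ (goodSet c' \ s) := by
    intro p1 hp1 p2 hp2 heq
    rcases hcls p1 hp1 with ⟨_, _, _, _, hl1, hr1⟩ | ⟨he1, hn1, _⟩ <;>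
      rcases hcls p2 hp2 with ⟨_, _, _, _, hl2, hr2⟩ | ⟨he2, hn2, _⟩
    · simp only [hφ] at heq; split_ifs at heq <;> omega
    · rw [he2] at heq; exfalso; apply hn2; omega
    · rw [he1] at heq; exfalso; apply hn1; omega
    · rw [he1, he2] at heq; exact heq
  have himg : φ '' (goodSet c' \ s) ⊆ goodSet c := by
    rintro q ⟨p, hp, rfl⟩
    rcases hcls p hp with ⟨_, _, _, hg, _, _⟩ | ⟨he, _, hg⟩
    · exact hg
    · rw [he]; exact hg
  have step1 : (goodSet c').ncard ≤ (goodSet c' \ s).ncard + 2 := by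
    have hsub : goodSet c' ⊆ (goodSet c' \ s) ∪ s := by
      intro p hp
      by_cases hps : p ∈ s
      · exact Or.inr hps
      · exact Or.inl ⟨hp, hps⟩
    calc (goodSet c').ncard ≤ ((goodSet c' \ s) ∪ s).ncard :=
          Set.ncard_le_ncard hsub (hfin'.diff.union ((Set.finite_singleton _).insert _))
      _ ≤ (goodSet c' \ s).ncard + s.ncard := Set.ncard_union_le _ _
      _ ≤ (goodSet c' \ s).ncard + 2 := by
          have : s.ncard ≤ 2 := by
            rw [hs]
            apply le_trans (Set.ncard_insert_le _ _)
            simp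
          omega
  have step2 : (goodSet c' \ s).ncard = (φ '' (goodSet c' \ s)).ncard :=
    (Set.ncard_image_of_injOn hinj).symm
  have step3 : (φ '' (goodSet c' \ s)).ncard ≤ (goodSet c).ncard :=
    Set.ncard_le_ncard himg hfin
  unfold pairCount
  omega

/-- The first move, starting from the alternating configuration, creates at most
one good pair (the destination is entirely outside the occupied interval). -/
lemma pairCount_first {k n : ℕ} {i j : ℤ} {c' : ℤ → Option Bool} (hk : 1 ≤ k) (hn : 3 ≤ n)
    (h : MoveTo k i j (altConfig n) c') : pairCount c' ≤ 1 := by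
  have hsrc : ∀ t : ℤ, 0 ≤ t → t < k → 1 ≤ i + t ∧ i + t ≤ (n : ℤ) := by
    intro t ht1 ht2
    have := (h.2.1 t ht1 ht2).1
    unfold altConfig at this
    by_cases ha : 1 ≤ i + t ∧ i + t ≤ (n : ℤ)
    · exact ha
    · rw [if_neg ha] at this; simp at this
  have hdst : ∀ t : ℤ, 0 ≤ t → t < k → ¬(1 ≤ j + t ∧ j + t ≤ (n : ℤ)) := by
    intro t ht1 ht2 hcon
    have := (h.2.1 t ht1 ht2).2
    unfold altConfig at this
    rw [if_pos hcon] at this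
    simp at this
  have hdi : (n : ℤ) + 1 ≤ j ∨ j + (k : ℤ) ≤ 1 := by
    by_contra hcon
    push_neg at hcon
    obtain ⟨hc1, hc2⟩ := hcon
    by_cases hj : 1 ≤ j
    · exact hdst 0 le_rfl (by exact_mod_cast hk) (by omega)
    · exact hdst (1 - j) (by omega) (by omega) (by omega)
  have hi1 : 1 ≤ i := by have := hsrc 0 le_rfl (by exact_mod_cast hk); omega
  have hik : i + (k : ℤ) - 1 ≤ (n : ℤ) := by
    have := hsrc ((k : ℤ) - 1) (by omega) (by omega); omega
  have hc' := h.2.2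
  have hT : ∀ p ∈ goodSet c', p = j - 1 ∨ p = j + (k : ℤ) - 1 := by
    intro p hp
    by_contra hcon
    push_neg at hcon
    rcases move_classify h hp hcon.1 hcon.2 with ⟨_, _, hg⟩ | ⟨_, _, hg⟩ <;>
      · rw [goodSet_alt n] at hg; exact hg
  rcases hdi with hr | hl
  · have hval : c' (j + (k : ℤ)) = none := by
      rw [hc']
      simp only
      rw [if_neg (by omega), if_neg (by omega)]
      unfold altConfig
      rw [if_neg (by omega)]
    have hsub : goodSet c' ⊆ {j - 1} := by
      intro p hp
      rcases hT p hp with h1 | h2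
      · exact h1
      · exfalso
        obtain ⟨hps, hpe⟩ := hp
        rw [h2] at hps hpe
        have : j + (k : ℤ) - 1 + 1 = j + (k : ℤ) := by ring
        rw [this, hval] at hpe
        rw [← hpe] at hps
        simp at hps
    calc pairCount c' ≤ ({j - 1} : Set ℤ).ncard :=
          Set.ncard_le_ncard hsub (Set.finite_singleton _)
      _ = 1 := Set.ncard_singleton _
  · have hval : c' (j - 1) = none := by
      rw [hc']
      simp only
      rw [if_neg (by omega), if_neg (by omega)]
      unfold altConfig
      rw [if_neg (by omega)]
    have hsub : goodSet c' ⊆ {j + (k : ℤ) - 1} := by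
      intro p hp
      rcases hT p hp with h1 | h2
      · exfalso
        obtain ⟨hps, _⟩ := hp
        rw [h1, hval] at hps
        simp at hps
      · exact h2
    calc pairCount c' ≤ ({j + (k : ℤ) - 1} : Set ℤ).ncard :=
          Set.ncard_le_ncard hsub (Set.finite_singleton _)
      _ = 1 := Set.ncard_singleton _

/-- A sorted configuration of `n` pegs has at least `n - 2` good pairs. -/
lemma sorted_pairCount {n : ℕ} {c : ℤ → Option Bool} (hn : 3 ≤ n) (h : IsSorted n c) :
    n - 2 ≤ pairCount c := by
  obtain ⟨j, w, h1, h2, h3⟩ := h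
  set a : ℤ := (((n + 1) / 2 : ℕ) : ℤ) with ha
  have han : 1 ≤ a ∧ a + 1 ≤ (n : ℤ) := by
    constructor <;> · rw [ha]; push_cast [Int.ofNat_tdiv]; omega
  have hfin : (goodSet c).Finite := by
    apply (Set.finite_Ico j (j + (n : ℤ))).subset
    intro p hp
    exact Set.mem_Ico.mpr ((h1 p).mp hp.1)
  set U : Set ℤ := Set.Ico j (j + (n : ℤ) - 1) \ {j + a - 1} with hU
  have hsub : U ⊆ goodSet c := by
    intro p hp
    obtain ⟨hpi, hpne⟩ := hp
    rw [Set.mem_Ico] at hpi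
    have hne : p ≠ j + a - 1 := by simpa using hpne
    by_cases hcase : p + 1 < j + a
    · have e1 : c p = some w := h2 p hpi.1 (by omega)
      have e2 : c (p + 1) = some w := h2 (p + 1) (by omega) hcase
      exact ⟨by rw [e1]; rfl, by rw [e1, e2]⟩
    · have e1 : c p = some (!w) := h3 p (by omega) (by omega)
      have e2 : c (p + 1) = some (!w) := h3 (p + 1) (by omega) (by omega)
      exact ⟨by rw [e1]; rfl, by rw [e1, e2]⟩
  have hUcard : U.ncard = n - 2 := by
    rw [hU, Set.ncard_diff_singleton_of_mem (by rw [Set.mem_Ico]; omega)]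
    rw [← Finset.coe_Ico, Set.ncard_coe_finset, Int.card_Ico]
    omega
  rw [← hUcard]
  exact Set.ncard_le_ncard hsub hfin

theorem lower_bound_floor (k n m : ℕ) (hk : 1 ≤ k) (hn : 3 ≤ n)
    (h : SortsIn k n m) : n / 2 ≤ m := by
  obtain ⟨f, hf0, hstep, hsorted⟩ := h
  have hfin : ∀ i, i ≤ m → FinSupp (f i) := by
    intro i
    induction i with
    | zero => intro _; rw [hf0]; exact finSupp_alt n
    | succ i ih =>
      intro hi
      obtain ⟨a, b, hmv⟩ := hstep i (by omega)
      exact finSupp_move (ih (by omega)) hmv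
  have hm1 : 1 ≤ m := by
    by_contra h0
    have hm0 : m = 0 := by omega
    have hz : pairCount (f 0) = 0 := by
      unfold pairCount
      rw [hf0, goodSet_alt]
      simp
    have hge := sorted_pairCount hn (hm0 ▸ hsorted)
    omega
  have key : ∀ i, 1 ≤ i → i ≤ m → pairCount (f i) ≤ 2 * i - 1 := by
    intro i
    induction i with
    | zero => omega
    | succ i ih =>
      intro _ hi
      by_cases hi0 : i = 0
      · subst hi0
        obtain ⟨a, b, hmv⟩ := hstep 0 (by omega)
        rw [hf0] at hmv
        have := pairCount_first hk hn hmv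
        omega
      · obtain ⟨a, b, hmv⟩ := hstep i (by omega)
        have := pairCount_move (hfin i (by omega)) hmv
        have := ih (by omega) (by omega)
        omega
  have hfinal := key m hm1 le_rfl
  have hs := sorted_pairCount hn hsorted
  omega
end

section
/- The alternating configuration of 5 pegs can be sorted using exactly 3 Berge 3-moves, namely the chain {6, 2, 5, 1}: move pegs at 2,3,4 to 6,7,8; then pegs at 5,6,7 to 2,3,4; then pegs at 1,2,3 to 5,6,7. Hence h(5,3) = 3 = ⌈5/2⌉. -/
set_option maxHeartbeats 2000000
set_option linter.unusedVariables false


def cfg1 : ℤ → Option Bool := fun p => if 6 ≤ p ∧ p < 6 + ((3:ℕ):ℤ) then altConfig 5 (2 + (p - 6))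
    else if 2 ≤ p ∧ p < 2 + ((3:ℕ):ℤ) then none else altConfig 5 p

def cfg2 : ℤ → Option Bool := fun p => if 2 ≤ p ∧ p < 2 + ((3:ℕ):ℤ) then cfg1 (5 + (p - 2))
    else if 5 ≤ p ∧ p < 5 + ((3:ℕ):ℤ) then none else cfg1 p

def cfg3 : ℤ → Option Bool := fun p => if 5 ≤ p ∧ p < 5 + ((3:ℕ):ℤ) then cfg2 (1 + (p - 5))
    else if 1 ≤ p ∧ p < 1 + ((3:ℕ):ℤ) then none else cfg2 p

lemma mv1 : MoveTo 3 2 6 (altConfig 5) cfg1 := by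
  refine ⟨by norm_num, ?_, rfl⟩
  intro t h1 h2
  have : t = 0 ∨ t = 1 ∨ t = 2 := by omega
  rcases this with rfl | rfl | rfl <;> decide

lemma mv2 : MoveTo 3 5 2 cfg1 cfg2 := by
  refine ⟨by norm_num, ?_, rfl⟩
  intro t h1 h2
  have : t = 0 ∨ t = 1 ∨ t = 2 := by omega
  rcases this with rfl | rfl | rfl <;> decide

lemma mv3 : MoveTo 3 1 5 cfg2 cfg3 := by
  refine ⟨by norm_num, ?_, rfl⟩
  intro t h1 h2
  have : t = 0 ∨ t = 1 ∨ t = 2 := by omega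
  rcases this with rfl | rfl | rfl <;> decide

lemma cfg3_none (p : ℤ) (h : ¬(4 ≤ p ∧ p < 9)) : cfg3 p = none := by
  simp only [cfg3, cfg2, cfg1, altConfig]
  split_ifs <;> (try rfl) <;> (exfalso; omega)

lemma sorted_cfg3 : IsSorted 5 cfg3 := by
  refine ⟨4, true, ?_, ?_, ?_⟩
  · intro p
    rcases em (4 ≤ p ∧ p < 9) with h | h
    · have : p = 4 ∨ p = 5 ∨ p = 6 ∨ p = 7 ∨ p = 8 := by omega
      rcases this with rfl|rfl|rfl|rfl|rfl <;> refine iff_of_true ?_ (by norm_num) <;> decide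
    · rw [cfg3_none p h]
      push_cast
      simp only [Option.isSome_none, Bool.false_eq_true, false_iff]
      omega
  · intro p h1 h2
    have : p = 4 ∨ p = 5 ∨ p = 6 := by omega
    rcases this with rfl|rfl|rfl <;> decide
  · intro p h1 h2
    have : p = 7 ∨ p = 8 := by omega
    rcases this with rfl|rfl <;> decide

lemma alt_isSome (p : ℤ) : (altConfig 5 p).isSome ↔ 1 ≤ p ∧ p ≤ 5 := by
  unfold altConfig; split_ifs with h <;> simp [h] <;> omega

lemma alt_T {p : ℤ} (h1 : 1 ≤ p) (h2 : p ≤ 5) (h3 : p % 2 = 1) : altConfig 5 p = some true := by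
  unfold altConfig
  rw [if_pos (show 1 ≤ p ∧ p ≤ ((5:ℕ):ℤ) from ⟨h1, by push_cast; omega⟩)]
  simp [h3]

lemma alt_F {p : ℤ} (h1 : 1 ≤ p) (h2 : p ≤ 5) (h3 : p % 2 = 0) : altConfig 5 p = some false := by
  unfold altConfig
  rw [if_pos (show 1 ≤ p ∧ p ≤ ((5:ℕ):ℤ) from ⟨h1, by push_cast; omega⟩)]
  have : ¬(p % 2 = 1) := by omega
  simp [this]

lemma moveTo_eval {i j : ℤ} {c c' : ℤ → Option Bool} (h : MoveTo 3 i j c c') (p : ℤ) :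
    c' p = if j ≤ p ∧ p < j + 3 then c (i + (p - j))
      else if i ≤ p ∧ p < i + 3 then none else c p := by
  obtain ⟨-, -, rfl⟩ := h; norm_num

lemma eval_in {i j : ℤ} {c c' : ℤ → Option Bool} (h : MoveTo 3 i j c c') {p : ℤ}
    (h1 : j ≤ p) (h2 : p < j + 3) : c' p = c (i + (p - j)) := by
  rw [moveTo_eval h, if_pos ⟨h1, h2⟩]

lemma eval_out {i j : ℤ} {c c' : ℤ → Option Bool} (h : MoveTo 3 i j c c') {p : ℤ}
    (h1 : ¬(j ≤ p ∧ p < j + 3)) (h2 : ¬(i ≤ p ∧ p < i + 3)) : c' p = c p := by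
  rw [moveTo_eval h, if_neg h1, if_neg h2]

lemma moveTo_isSome {i j : ℤ} {c c' : ℤ → Option Bool} (h : MoveTo 3 i j c c') (p : ℤ) :
    (c' p).isSome ↔ ((j ≤ p ∧ p < j + 3) ∨ ((c p).isSome ∧ ¬(i ≤ p ∧ p < i + 3))) := by
  have hocc := h.2.1
  rw [moveTo_eval h p]
  split_ifs with h1 h2
  · exact iff_of_true (hocc (p - j) (by omega) (by omega)).1 (Or.inl h1)
  · simp [h1, h2]
  · simp [h1, h2]

lemma clash {c : ℤ → Option Bool} {s : ℤ} {w : Bool}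
    (hw : ∀ p : ℤ, s ≤ p → p < s + (((5 + 1) / 2 : ℕ) : ℤ) → c p = some w)
    {p q : ℤ} (hp1 : s ≤ p) (hp2 : p < s + 3) (hq1 : s ≤ q) (hq2 : q < s + 3)
    (ep : c p = some true) (eq : c q = some false) : False := by
  have h1 := hw p hp1 (by push_cast; omega)
  have h2 := hw q hq1 (by push_cast; omega)
  rw [ep] at h1; rw [eq] at h2
  simp at h1 h2; simp_all

lemma first_move {i j : ℤ} {c' : ℤ → Option Bool} (h : MoveTo 3 i j (altConfig 5) c') :
    (1 ≤ i ∧ i + 2 ≤ 5) ∧ (j ≤ -2 ∨ 6 ≤ j) := by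
  have h0 := h.2.1 0 (by norm_num) (by norm_num)
  have h1 := h.2.1 1 (by norm_num) (by norm_num)
  have h2 := h.2.1 2 (by norm_num) (by norm_num)
  have a0 := (alt_isSome (i + 0)).1 h0.1
  have a2 := (alt_isSome (i + 2)).1 h2.1
  have n0 : ¬(1 ≤ j + 0 ∧ j + 0 ≤ 5) := fun hh => by
    have := (alt_isSome (j+0)).2 hh; rw [h0.2] at this; simp at this
  have n1 : ¬(1 ≤ j + 1 ∧ j + 1 ≤ 5) := fun hh => by
    have := (alt_isSome (j+1)).2 hh; rw [h1.2] at this; simp at this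
  have n2 : ¬(1 ≤ j + 2 ∧ j + 2 ≤ 5) := fun hh => by
    have := (alt_isSome (j+2)).2 hh; rw [h2.2] at this; simp at this
  omega

lemma not_sorted_alt : ¬ IsSorted 5 (altConfig 5) := by
  rintro ⟨s, w, hsupp, hw, -⟩
  have h1 := (hsupp 1).1 (by decide)
  have h5 := (hsupp 5).1 (by decide)
  have hs : s = 1 := by omega
  subst hs
  have e1 := hw 1 (by norm_num) (by norm_num)
  have e2 := hw 2 (by norm_num) (by norm_num)
  rw [alt_T (by norm_num) (by norm_num) (by norm_num)] at e1
  rw [alt_F (by norm_num) (by norm_num) (by norm_num)] at e2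
  simp at e1 e2; simp_all

lemma not_sorts1 {i j : ℤ} {c' : ℤ → Option Bool} (hm : MoveTo 3 i j (altConfig 5) c') :
    ¬ IsSorted 5 c' := by
  obtain ⟨⟨hi1, hi2⟩, hj⟩ := first_move hm
  rintro ⟨s, w, hsupp, hw, -⟩
  have key : ∀ p : ℤ, ((j ≤ p ∧ p < j+3) ∨ ((1 ≤ p ∧ p ≤ 5) ∧ ¬(i ≤ p ∧ p < i+3)))
      ↔ (s ≤ p ∧ p < s + 5) := by
    intro p
    rw [← alt_isSome p, ← moveTo_isSome hm p, hsupp p]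
    norm_num
  have hcase : (i = 1 ∧ s = 4 ∧ j = 6) ∨ (i = 3 ∧ s = -2 ∧ j = -2) := by
    have k1 := key s
    have k2 := key (s+1)
    have k3 := key (s+2)
    have k4 := key (s+3)
    have k5 := key (s+4)
    have q1 := key 1
    have q2 := key 2
    have q3 := key 3
    have q4 := key 4
    have q5 := key 5
    clear key hsupp hw
    have hiv : i = 1 ∨ i = 2 ∨ i = 3 := by omega
    rcases hj with hj | hj <;> rcases hiv with rfl | rfl | rfl <;> omega
  rcases hcase with ⟨rfl, rfl, rfl⟩ | ⟨rfl, rfl, rfl⟩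
  · refine clash hw (p := 5) (q := 4) (by norm_num) (by norm_num) (by norm_num) (by norm_num) ?_ ?_
    · rw [eval_out hm (by norm_num) (by norm_num)]
      exact alt_T (by norm_num) (by norm_num) (by norm_num)
    · rw [eval_out hm (by norm_num) (by norm_num)]
      exact alt_F (by norm_num) (by norm_num) (by norm_num)
  · refine clash hw (p := -2) (q := -1) (by norm_num) (by norm_num) (by norm_num) (by norm_num) ?_ ?_
    · rw [eval_in hm (by norm_num) (by norm_num), show (3:ℤ) + (-2 - -2) = 3 from by norm_num]
      exact alt_T (by norm_num) (by norm_num) (by norm_num)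
    · rw [eval_in hm (by norm_num) (by norm_num), show (3:ℤ) + (-1 - -2) = 4 from by norm_num]
      exact alt_F (by norm_num) (by norm_num) (by norm_num)

lemma not_sorts2 {i1 j1 i2 j2 : ℤ} {c1 c2 : ℤ → Option Bool}
    (hm1 : MoveTo 3 i1 j1 (altConfig 5) c1) (hm2 : MoveTo 3 i2 j2 c1 c2) :
    ¬ IsSorted 5 c2 := by
  obtain ⟨⟨hi1a, hi1b⟩, hj1⟩ := first_move hm1
  rintro ⟨s, w, hsupp, hw, -⟩
  have mem1 : ∀ p : ℤ, (c1 p).isSome ↔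
      ((j1 ≤ p ∧ p < j1+3) ∨ ((1 ≤ p ∧ p ≤ 5) ∧ ¬(i1 ≤ p ∧ p < i1+3))) := fun p => by
    rw [moveTo_isSome hm1 p, alt_isSome]
  have key : ∀ p : ℤ, ((j2 ≤ p ∧ p < j2+3) ∨
      (((j1 ≤ p ∧ p < j1+3) ∨ ((1 ≤ p ∧ p ≤ 5) ∧ ¬(i1 ≤ p ∧ p < i1+3))) ∧
        ¬(i2 ≤ p ∧ p < i2+3))) ↔ (s ≤ p ∧ p < s + 5) := fun p => by
    rw [← mem1 p, ← moveTo_isSome hm2 p, hsupp p]; norm_num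
  have o0 := (mem1 _).1 (hm2.2.1 0 (by norm_num) (by norm_num)).1
  have o1 := (mem1 _).1 (hm2.2.1 1 (by norm_num) (by norm_num)).1
  have o2 := (mem1 _).1 (hm2.2.1 2 (by norm_num) (by norm_num)).1
  have z0 : ¬((j1 ≤ j2+0 ∧ j2+0 < j1+3) ∨ ((1 ≤ j2+0 ∧ j2+0 ≤ 5) ∧ ¬(i1 ≤ j2+0 ∧ j2+0 < i1+3))) := fun hh => by
    have h' := (mem1 _).2 hh
    rw [(hm2.2.1 0 (by norm_num) (by norm_num)).2] at h'; simp at h'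
  have z1 : ¬((j1 ≤ j2+1 ∧ j2+1 < j1+3) ∨ ((1 ≤ j2+1 ∧ j2+1 ≤ 5) ∧ ¬(i1 ≤ j2+1 ∧ j2+1 < i1+3))) := fun hh => by
    have h' := (mem1 _).2 hh
    rw [(hm2.2.1 1 (by norm_num) (by norm_num)).2] at h'; simp at h'
  have z2 : ¬((j1 ≤ j2+2 ∧ j2+2 < j1+3) ∨ ((1 ≤ j2+2 ∧ j2+2 ≤ 5) ∧ ¬(i1 ≤ j2+2 ∧ j2+2 < i1+3))) := fun hh => by
    have h' := (mem1 _).2 hh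
    rw [(hm2.2.1 2 (by norm_num) (by norm_num)).2] at h'; simp at h'
  have hi1v : i1 = 1 ∨ i1 = 2 ∨ i1 = 3 := by omega
  have hcase : i2 = j1 ∨ (i1 = 1 ∧ j1 = 6 ∧ (i2 = 4 ∨ i2 = 5)) ∨ (i1 = 2 ∧ j1 = 6 ∧ i2 = 5) ∨
      (i1 = 2 ∧ j1 = -2 ∧ i2 = -1) ∨ (i1 = 3 ∧ j1 = -2 ∧ (i2 = -1 ∨ i2 = 0)) := by
    clear key hsupp hw mem1 z0 z1 z2
    rcases hj1 with h | h <;> rcases hi1v with h1 | h1 | h1 <;> subst h1 <;> omega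
  rcases hcase with hE | ⟨rfl, rfl, hE | hE⟩ | ⟨rfl, rfl, rfl⟩ | ⟨rfl, rfl, rfl⟩ | ⟨rfl, rfl, hE | hE⟩
  · -- i2 = j1 : second move moves the transported block again
    subst hE
    rcases hi1v with rfl | rfl | rfl
    · -- i1 = 1, leftover pegs 4,5
      have hsj : (s = 1 ∧ j2 = 1) ∨ (s = 4 ∧ j2 = 6) := by
        have k0 := key s; have k1 := key (s+1); have k2 := key (s+2)
        have k3 := key (s+3); have k4 := key (s+4)
        have q4 := key 4; have q5 := key 5
        clear key hsupp hw mem1 o0 o1 o2 z0 z1 z2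
        rcases hj1 with h | h <;> omega
      rcases hsj with ⟨rfl, rfl⟩ | ⟨rfl, rfl⟩
      · refine clash hw (p := 1) (q := 2) (by norm_num) (by norm_num) (by norm_num) (by norm_num) ?_ ?_
        · rw [eval_in hm2 (by norm_num) (by norm_num), show i2 + ((1:ℤ) - 1) = i2 from by ring,
            eval_in hm1 (by omega) (by omega), show (1:ℤ) + (i2 - i2) = 1 from by ring]
          exact alt_T (by norm_num) (by norm_num) (by norm_num)
        · rw [eval_in hm2 (by norm_num) (by norm_num), show i2 + ((2:ℤ) - 1) = i2 + 1 from by ring,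
            eval_in hm1 (by omega) (by omega), show (1:ℤ) + (i2 + 1 - i2) = 2 from by ring]
          exact alt_F (by norm_num) (by norm_num) (by norm_num)
      · refine clash hw (p := 5) (q := 4) (by norm_num) (by norm_num) (by norm_num) (by norm_num) ?_ ?_
        · rw [eval_out hm2 (by omega) (by omega), eval_out hm1 (by omega) (by omega)]
          exact alt_T (by norm_num) (by norm_num) (by norm_num)
        · rw [eval_out hm2 (by omega) (by omega), eval_out hm1 (by omega) (by omega)]
          exact alt_F (by norm_num) (by norm_num) (by norm_num)
    · -- i1 = 2, leftover pegs 1,5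
      have hsj : s = 1 ∧ j2 = 2 := by
        have k0 := key s; have k1 := key (s+1); have k2 := key (s+2)
        have k3 := key (s+3); have k4 := key (s+4)
        have q1 := key 1; have q5 := key 5
        clear key hsupp hw mem1 o0 o1 o2 z0 z1 z2
        rcases hj1 with h | h <;> omega
      obtain ⟨rfl, rfl⟩ := hsj
      refine clash hw (p := 1) (q := 2) (by norm_num) (by norm_num) (by norm_num) (by norm_num) ?_ ?_
      · rw [eval_out hm2 (by omega) (by omega), eval_out hm1 (by omega) (by omega)]
        exact alt_T (by norm_num) (by norm_num) (by norm_num)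
      · rw [eval_in hm2 (by norm_num) (by norm_num), show i2 + ((2:ℤ) - 2) = i2 from by ring,
          eval_in hm1 (by omega) (by omega), show (2:ℤ) + (i2 - i2) = 2 from by ring]
        exact alt_F (by norm_num) (by norm_num) (by norm_num)
    · -- i1 = 3, leftover pegs 1,2
      have hsj : (s = 1 ∧ j2 = 3) ∨ (s = -2 ∧ j2 = -2) := by
        have k0 := key s; have k1 := key (s+1); have k2 := key (s+2)
        have k3 := key (s+3); have k4 := key (s+4)
        have q1 := key 1; have q2 := key 2
        clear key hsupp hw mem1 o0 o1 o2 z0 z1 z2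
        rcases hj1 with h | h <;> omega
      rcases hsj with ⟨rfl, rfl⟩ | ⟨rfl, rfl⟩
      · refine clash hw (p := 1) (q := 2) (by norm_num) (by norm_num) (by norm_num) (by norm_num) ?_ ?_
        · rw [eval_out hm2 (by omega) (by omega), eval_out hm1 (by omega) (by omega)]
          exact alt_T (by norm_num) (by norm_num) (by norm_num)
        · rw [eval_out hm2 (by omega) (by omega), eval_out hm1 (by omega) (by omega)]
          exact alt_F (by norm_num) (by norm_num) (by norm_num)
      · refine clash hw (p := -2) (q := -1) (by norm_num) (by norm_num) (by norm_num) (by norm_num) ?_ ?_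
        · rw [eval_in hm2 (by norm_num) (by norm_num), show i2 + ((-2:ℤ) - -2) = i2 from by ring,
            eval_in hm1 (by omega) (by omega), show (3:ℤ) + (i2 - i2) = 3 from by ring]
          exact alt_T (by norm_num) (by norm_num) (by norm_num)
        · rw [eval_in hm2 (by norm_num) (by norm_num), show i2 + ((-1:ℤ) - -2) = i2 + 1 from by ring,
            eval_in hm1 (by omega) (by omega), show (3:ℤ) + (i2 + 1 - i2) = 4 from by ring]
          exact alt_F (by norm_num) (by norm_num) (by norm_num)
  · -- i1 = 1, j1 = 6, i2 = 4
    subst hE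
    have hsj : s = 7 ∧ j2 = 9 := by
      have k0 := key s; have k1 := key (s+1); have k2 := key (s+2)
      have k3 := key (s+3); have k4 := key (s+4)
      have q7 := key 7; have q8 := key 8
      clear key hsupp hw mem1 o0 o1 o2
      omega
    obtain ⟨rfl, rfl⟩ := hsj
    refine clash hw (p := 8) (q := 7) (by norm_num) (by norm_num) (by norm_num) (by norm_num) ?_ ?_
    · rw [eval_out hm2 (by omega) (by omega), eval_in hm1 (by norm_num) (by norm_num),
        show (1:ℤ) + (8 - 6) = 3 from by norm_num]
      exact alt_T (by norm_num) (by norm_num) (by norm_num)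
    · rw [eval_out hm2 (by omega) (by omega), eval_in hm1 (by norm_num) (by norm_num),
        show (1:ℤ) + (7 - 6) = 2 from by norm_num]
      exact alt_F (by norm_num) (by norm_num) (by norm_num)
  · -- i1 = 1, j1 = 6, i2 = 5 : impossible support
    subst hE
    have q4 := key 4; have q8 := key 8; have q5 := key 5
    clear key hsupp hw mem1 o0 o1 o2
    omega
  · -- i1 = 2, j1 = 6, i2 = 5 : impossible support
    have q1 := key 1; have q8 := key 8
    clear key hsupp hw mem1 o0 o1 o2 z0 z1 z2
    omega
  · -- i1 = 2, j1 = -2, i2 = -1 : impossible support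
    have q1 := key (-2); have q8 := key 5
    clear key hsupp hw mem1 o0 o1 o2 z0 z1 z2
    omega
  · -- i1 = 3, j1 = -2, i2 = -1 : impossible support
    subst hE
    have qa := key (-2); have qb := key 2
    have qc := key (-1)
    clear key hsupp hw mem1 o0 o1 o2
    omega
  · -- i1 = 3, j1 = -2, i2 = 0
    subst hE
    have hsj : s = -5 ∧ j2 = -5 := by
      have k0 := key s; have k1 := key (s+1); have k2 := key (s+2)
      have k3 := key (s+3); have k4 := key (s+4)
      have qa := key (-2); have qb := key (-1)
      clear key hsupp hw mem1 o0 o1 o2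
      omega
    obtain ⟨rfl, rfl⟩ := hsj
    refine clash hw (p := -5) (q := -3) (by norm_num) (by norm_num) (by norm_num) (by norm_num) ?_ ?_
    · rw [eval_in hm2 (by norm_num) (by norm_num), show (0:ℤ) + (-5 - -5) = 0 from by norm_num,
        eval_in hm1 (by norm_num) (by norm_num), show (3:ℤ) + (0 - -2) = 5 from by norm_num]
      exact alt_T (by norm_num) (by norm_num) (by norm_num)
    · rw [eval_in hm2 (by norm_num) (by norm_num), show (0:ℤ) + (-3 - -5) = 2 from by norm_num,
        eval_out hm1 (by norm_num) (by norm_num)]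
      exact alt_F (by norm_num) (by norm_num) (by norm_num)


lemma mem3 : SortsIn 3 5 3 := by
  refine ⟨fun n => match n with | 0 => altConfig 5 | 1 => cfg1 | 2 => cfg2 | _ => cfg3,
    rfl, ?_, sorted_cfg3⟩
  intro i hi
  interval_cases i
  · exact ⟨2, 6, mv1⟩
  · exact ⟨5, 2, mv2⟩
  · exact ⟨1, 5, mv3⟩

theorem sort_five_pegs_three_moves :
    (∃ c₁ c₂ c₃ : ℤ → Option Bool,
      MoveTo 3 2 6 (altConfig 5) c₁ ∧ MoveTo 3 5 2 c₁ c₂ ∧ MoveTo 3 1 5 c₂ c₃ ∧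
      IsSorted 5 c₃) ∧
    IsLeast {m : ℕ | SortsIn 3 5 m} 3 := by
  constructor
  · exact ⟨cfg1, cfg2, cfg3, mv1, mv2, mv3, sorted_cfg3⟩
  constructor
  · exact mem3
  · intro m hm
    by_contra hlt
    push_neg at hlt
    interval_cases m
    · obtain ⟨f, h0, -, hs⟩ := hm
      rw [h0] at hs
      exact not_sorted_alt hs
    · obtain ⟨f, h0, hmv, hs⟩ := hm
      obtain ⟨i, j, hmt⟩ := hmv 0 (by norm_num)
      rw [h0] at hmt
      exact not_sorts1 hmt hs
    · obtain ⟨f, h0, hmv, hs⟩ := hm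
      obtain ⟨i1, j1, hmt1⟩ := hmv 0 (by norm_num)
      obtain ⟨i2, j2, hmt2⟩ := hmv 1 (by norm_num)
      rw [h0] at hmt1
      exact not_sorts2 hmt1 hmt2 hs
end
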